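/- Let ρ = λ1|00⟩⟨00| + λ2(|00⟩⟨11| + |11⟩⟨00|) + λ4|11⟩⟨11| and ρ' = μ1|00⟩⟨00| + μ2(|00⟩⟨11| + |11⟩⟨00|) + μ4|11⟩⟨11| be two-qubit Schmidt-correlated states in standard form, i.e., λ1, λ2, λ4, μ1, μ2, μ4 ≥ 0, λ1 + λ4 = 1 = μ1 + μ4, λ1·λ4 ≥ λ2², μ1·μ4 ≥ μ2², λ1 ≥ λ4 and μ1 ≥ μ4. Then ρ and ρ' are LU equivalent if and only if λ1 = μ1, λ2 = μ2 and λ4 = μ4 (i.e., ρ = ρ'). -/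
import Mathlib

open Matrix Kronecker

/-- The two-qubit Schmidt-correlated state
`ρ = c1|00⟩⟨00| + c2|00⟩⟨11| + conj(c2)|11⟩⟨00| + c4|11⟩⟨11|`. -/
noncomputable def scState (c1 c4 : ℝ) (c2 : ℂ) :
    Matrix (Fin 2 × Fin 2) (Fin 2 × Fin 2) ℂ :=
  Matrix.of fun p q =>
    if p = (0, 0) ∧ q = (0, 0) then (c1 : ℂ)
    else if p = (0, 0) ∧ q = (1, 1) then c2
    else if p = (1, 1) ∧ q = (0, 0) then (starRingEnd ℂ) c2
    else if p = (1, 1) ∧ q = (1, 1) then (c4 : ℂ)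
    else 0

/-- Local unitary equivalence of two-qubit states. -/
def LUequiv (ρ' ρ : Matrix (Fin 2 × Fin 2) (Fin 2 × Fin 2) ℂ) : Prop :=
  ∃ U1 U2 : Matrix (Fin 2) (Fin 2) ℂ,
    U1 ∈ Matrix.unitaryGroup (Fin 2) ℂ ∧ U2 ∈ Matrix.unitaryGroup (Fin 2) ℂ ∧
    ρ' = (U1 ⊗ₖ U2) * ρ * (U1 ⊗ₖ U2)ᴴ

/-- Partial trace over the second factor. -/
noncomputable def ptA (ρ : Matrix (Fin 2 × Fin 2) (Fin 2 × Fin 2) ℂ) :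
    Matrix (Fin 2) (Fin 2) ℂ :=
  Matrix.of fun i j => ∑ k : Fin 2, ρ (i, k) (j, k)

lemma kron_conjT (A B : Matrix (Fin 2) (Fin 2) ℂ) : (A ⊗ₖ B)ᴴ = Aᴴ ⊗ₖ Bᴴ := by
  ext ⟨i, k⟩ ⟨j, l⟩
  simp [Matrix.conjTranspose_apply, Matrix.kroneckerMap_apply, mul_comm]

lemma trace_conj_sq {n : Type*} [Fintype n] [DecidableEq n]
    (U D : Matrix n n ℂ) (hU : Uᴴ * U = 1) :
    Matrix.trace ((U * D * Uᴴ) * (U * D * Uᴴ)) = Matrix.trace (D * D) := by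
  have h : (U * D * Uᴴ) * (U * D * Uᴴ) = U * (D * D) * Uᴴ := by
    calc (U * D * Uᴴ) * (U * D * Uᴴ) = U * (D * ((Uᴴ * U) * D)) * Uᴴ := by noncomm_ring
    _ = U * (D * D) * Uᴴ := by rw [hU, one_mul]
  rw [h, Matrix.trace_mul_cycle, ← Matrix.mul_assoc, hU, one_mul]

lemma ptA_conj (U1 U2 : Matrix (Fin 2) (Fin 2) ℂ) (hU2 : U2ᴴ * U2 = 1)
    (ρ : Matrix (Fin 2 × Fin 2) (Fin 2 × Fin 2) ℂ) :
    ptA ((U1 ⊗ₖ U2) * ρ * (U1 ⊗ₖ U2)ᴴ) = U1 * ptA ρ * U1ᴴ := by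
  have h : ∀ a b : Fin 2, (starRingEnd ℂ) (U2 0 a) * U2 0 b
      + (starRingEnd ℂ) (U2 1 a) * U2 1 b = if a = b then 1 else 0 := by
    intro a b
    have := congrFun (congrFun hU2 a) b
    simpa [Matrix.mul_apply, Fin.sum_univ_two, Matrix.conjTranspose_apply,
      Matrix.one_apply] using this
  have h00 := h 0 0; have h01 := h 0 1; have h10 := h 1 0; have h11 := h 1 1
  norm_num at h00 h11
  rw [if_neg (by decide)] at h01
  rw [if_neg (by decide)] at h10
  ext i j
  simp only [ptA, Matrix.of_apply, Matrix.mul_apply, Matrix.conjTranspose_apply,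
    Matrix.kroneckerMap_apply, Fintype.sum_prod_type, Fin.sum_univ_two, star_mul',
    Complex.star_def]
  linear_combination
    (U1 i 0 * ρ (0,0) (0,0) * (starRingEnd ℂ) (U1 j 0) + U1 i 0 * ρ (0,0) (1,0) * (starRingEnd ℂ) (U1 j 1) + U1 i 1 * ρ (1,0) (0,0) * (starRingEnd ℂ) (U1 j 0) + U1 i 1 * ρ (1,0) (1,0) * (starRingEnd ℂ) (U1 j 1)) * h00
    + (U1 i 0 * ρ (0,1) (0,0) * (starRingEnd ℂ) (U1 j 0) + U1 i 0 * ρ (0,1) (1,0) * (starRingEnd ℂ) (U1 j 1) + U1 i 1 * ρ (1,1) (0,0) * (starRingEnd ℂ) (U1 j 0) + U1 i 1 * ρ (1,1) (1,0) * (starRingEnd ℂ) (U1 j 1)) * h01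
    + (U1 i 0 * ρ (0,0) (0,1) * (starRingEnd ℂ) (U1 j 0) + U1 i 0 * ρ (0,0) (1,1) * (starRingEnd ℂ) (U1 j 1) + U1 i 1 * ρ (1,0) (0,1) * (starRingEnd ℂ) (U1 j 0) + U1 i 1 * ρ (1,0) (1,1) * (starRingEnd ℂ) (U1 j 1)) * h10
    + (U1 i 0 * ρ (0,1) (0,1) * (starRingEnd ℂ) (U1 j 0) + U1 i 0 * ρ (0,1) (1,1) * (starRingEnd ℂ) (U1 j 1) + U1 i 1 * ρ (1,1) (0,1) * (starRingEnd ℂ) (U1 j 0) + U1 i 1 * ρ (1,1) (1,1) * (starRingEnd ℂ) (U1 j 1)) * h11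

lemma trace_sc_sq (c1 c4 c2 : ℝ) :
    Matrix.trace (scState c1 c4 (c2 : ℂ) * scState c1 c4 (c2 : ℂ))
      = ((c1^2 + c4^2 + 2 * c2^2 : ℝ) : ℂ) := by
  push_cast
  simp [Matrix.trace, Matrix.mul_apply, Fintype.sum_prod_type, Fin.sum_univ_two,
    scState, Matrix.diag, Prod.mk.injEq, Complex.conj_ofReal]
  ring

lemma trace_ptA_sc_sq (c1 c4 c2 : ℝ) :
    Matrix.trace (ptA (scState c1 c4 (c2 : ℂ)) * ptA (scState c1 c4 (c2 : ℂ)))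
      = ((c1^2 + c4^2 : ℝ) : ℂ) := by
  push_cast
  simp [Matrix.trace, Matrix.mul_apply, Fin.sum_univ_two,
    scState, ptA, Matrix.diag, Prod.mk.injEq]
  ring

/-- **Theorem 3.** Two SC states in standard form are local unitary equivalent
iff their standard forms coincide. -/
theorem sc_standard_forms_LU_iff_eq (l1 l2 l4 m1 m2 m4 : ℝ)
    (hl1 : 0 ≤ l1) (hl2 : 0 ≤ l2) (hl4 : 0 ≤ l4)
    (hm1 : 0 ≤ m1) (hm2 : 0 ≤ m2) (hm4 : 0 ≤ m4)
    (hlsum : l1 + l4 = 1) (hmsum : m1 + m4 = 1)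
    (hl : l2 ^ 2 ≤ l1 * l4) (hm : m2 ^ 2 ≤ m1 * m4)
    (hlord : l4 ≤ l1) (hmord : m4 ≤ m1) :
    LUequiv (scState m1 m4 (m2 : ℂ)) (scState l1 l4 (l2 : ℂ)) ↔
      l1 = m1 ∧ l2 = m2 ∧ l4 = m4 := by
  constructor
  · rintro ⟨U1, U2, hU1, hU2, hρ⟩
    have hU1' : U1ᴴ * U1 = 1 := by
      have := Matrix.mem_unitaryGroup_iff'.mp hU1
      rwa [Matrix.star_eq_conjTranspose] at this
    have hU2' : U2ᴴ * U2 = 1 := by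
      have := Matrix.mem_unitaryGroup_iff'.mp hU2
      rwa [Matrix.star_eq_conjTranspose] at this
    have hUk : (U1 ⊗ₖ U2)ᴴ * (U1 ⊗ₖ U2) = 1 := by
      rw [kron_conjT, ← Matrix.mul_kronecker_mul, hU1', hU2', Matrix.one_kronecker_one]
    -- invariant 1 : trace of ρ²
    have e1 : m1^2 + m4^2 + 2 * m2^2 = l1^2 + l4^2 + 2 * l2^2 := by
      have := trace_conj_sq (U1 ⊗ₖ U2) (scState l1 l4 (l2 : ℂ)) hUk
      rw [← hρ, trace_sc_sq, trace_sc_sq] at this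
      exact_mod_cast this
    -- invariant 2 : trace of (ptA ρ)²
    have e2 : m1^2 + m4^2 = l1^2 + l4^2 := by
      have hpt := ptA_conj U1 U2 hU2' (scState l1 l4 (l2 : ℂ))
      rw [← hρ] at hpt
      have := trace_conj_sq U1 (ptA (scState l1 l4 (l2 : ℂ))) hU1'
      rw [← hpt, trace_ptA_sc_sq, trace_ptA_sc_sq] at this
      exact_mod_cast this
    have h2 : l2 = m2 := by nlinarith [sq_nonneg (l2 - m2), sq_nonneg (l2 + m2)]
    have key : (l1 - m1) * (l1 + m1 - 1) = 0 := by nlinarith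
    have h1 : l1 = m1 := by
      rcases mul_eq_zero.mp key with h | h
      · linarith
      · linarith
    exact ⟨h1, h2, by linarith⟩
  · rintro ⟨h1, h2, h4⟩
    subst h1; subst h2; subst h4
    exact ⟨1, 1, one_mem _, one_mem _, by
      rw [Matrix.one_kronecker_one, Matrix.conjTranspose_one, Matrix.one_mul, Matrix.mul_one]⟩
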